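/- Let x, y, a, b be elements of a commutative ring R with x = Σᵢ xᵢ, y = Σᵢ yᵢ, a = Σᵢ aᵢ, b = Σᵢ bᵢ (additive sharings over n parties), and c = a*b with c = Σᵢ cᵢ. Define ρ = x - a and ε = y - b. Then the shares zᵢ = cᵢ + ε*aᵢ + ρ*bᵢ + (if i = 0 then ρ*ε else 0) satisfy Σᵢ zᵢ = x*y. -/
import Mathlib

/-- n-party SPDZ multiplication: local shares reconstruct the product. -/
theorem spdz_multiparty {R : Type*} [CommRing R] {n : ℕ} [NeZero n]
    (x y a b c : R) (xs ys as bs cs : Fin n → R)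
    (hx : x = ∑ i, xs i) (hy : y = ∑ i, ys i)
    (ha : a = ∑ i, as i) (hb : b = ∑ i, bs i)
    (hc : c = a * b) (hcs : c = ∑ i, cs i) :
    (∑ i, (cs i + (y - b) * as i + (x - a) * bs i +
      (if i = 0 then (x - a) * (y - b) else 0))) = x * y := by
  simp only [Finset.sum_add_distrib, ← Finset.mul_sum, ← ha, ← hb, ← hcs,
    Finset.sum_ite_eq' Finset.univ (0 : Fin n), Finset.mem_univ, if_true]
  rw [hc]; ring
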